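/- Let 0 < α < 1, a = 1/α, ε ≥ 0, and let φ_ε = φ + ε where φ ∈ C³((0,ξ₀)) is positive with φ(ξ)φ''(ξ) ≤ −((1−α)/α)(φ'(ξ))² on (0,ξ₀). Suppose moreover that at some point ξ ∈ (0,ξ₀) the inequality a²φ_ε(ξ)² + 2a(a−1)φ_ε(ξ) + (a−1)² + 2aφ_ε(ξ) − 2(1−α)a/α ≤ 0 holds. Then (a φ_ε(ξ)φ_ε'(ξ) + (a−1)φ_ε'(ξ))² + 2a φ_ε(ξ) φ_ε'(ξ)² + 2a φ_ε(ξ) φ_ε''(ξ) ≤ 0. -/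
import Mathlib


theorem stmt_2 (α ξ₀ ε : ℝ) (hα0 : 0 < α) (hα1 : α < 1) (hξ₀ : 0 < ξ₀) (hε : 0 ≤ ε)
    (a : ℝ) (ha : a = 1 / α)
    (φ : ℝ → ℝ) (hφC3 : ContDiffOn ℝ 3 φ (Set.Ioo 0 ξ₀))
    (hφpos : ∀ ξ ∈ Set.Ioo 0 ξ₀, 0 < φ ξ)
    (hφφ'' : ∀ ξ ∈ Set.Ioo 0 ξ₀,
      φ ξ * deriv (deriv φ) ξ ≤ -((1 - α) / α) * (deriv φ ξ) ^ 2)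
    (ξ : ℝ) (hξ : ξ ∈ Set.Ioo 0 ξ₀)
    (hquad : a ^ 2 * (φ ξ + ε) ^ 2 + 2 * a * (a - 1) * (φ ξ + ε) + (a - 1) ^ 2
      + 2 * a * (φ ξ + ε) - 2 * (1 - α) * a / α ≤ 0) :
    (a * (φ ξ + ε) * deriv φ ξ + (a - 1) * deriv φ ξ) ^ 2
      + 2 * a * (φ ξ + ε) * (deriv φ ξ) ^ 2
      + 2 * a * (φ ξ + ε) * deriv (deriv φ) ξ ≤ 0 := by
  have hp := hφpos ξ hξ
  have hkey := hφφ'' ξ hξ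
  have ha0 : 0 < a := by rw [ha]; positivity
  set d := deriv φ ξ
  set D := deriv (deriv φ) ξ
  have hc : 0 ≤ (1 - α) / α := by
    apply div_nonneg <;> linarith
  have hD : D ≤ 0 := by nlinarith [sq_nonneg d]
  have hpD : (φ ξ + ε) * D ≤ -((1 - α) / α) * d ^ 2 := by nlinarith
  have haα : a * α = 1 := by rw [ha]; field_simp
  have h2 : 2 * (1 - α) * a / α = 2 * a * ((1 - α) / α) := by ring
  rw [h2] at hquad
  nlinarith [sq_nonneg d, mul_nonneg (sq_nonneg d) ha0.le,
    mul_le_mul_of_nonneg_left hpD (by linarith : (0:ℝ) ≤ 2 * a),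
    mul_le_mul_of_nonneg_right hquad (sq_nonneg d)]
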